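/- arXiv:0906.1425 — 13 statements merged into one kernel-verified Lean document; each statement's English description precedes it below -/
import Mathlib

section
/- Let r : ℝ → ℝ² be a C² curve and let aⁱ, aʲ, aⁱⱼ, aʲᵢ : ℝ → ℝ be differentiable functions. Fix t ∈ ℝ and suppose the vectors r'(t) and r''(t) are linearly independent. Then the equality of points (r + aʲ·r' + aⁱⱼ·(r + aʲ·r')')(t) = (r + aⁱ·r' + aʲᵢ·(r + aⁱ·r')')(t) holds if and only if the two scalar equations aʲ(t)·aⁱⱼ(t) = aⁱ(t)·aʲᵢ(t) and (1 + (aʲ)'(t))·aⁱⱼ(t) + aʲ(t) = (1 + (aⁱ)'(t))·aʲᵢ(t) + aⁱ(t) hold. -/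
/-!
Differentiating the point `r + a • r'` of the tangent line gives `(1 + a') • r' + a • r''`, so each side
of the compatibility condition is `r` plus a combination of `r'` and `r''`. As `r'(t)` and `r''(t)`
are linearly independent, the two points agree exactly when their coefficients do, and comparing the
coefficients of `r''` and of `r'` gives the two (aa)-equations.
-/

theorem LinearIndependent.smul_add_smul_eq_smul_add_smul_iff {R M : Type*} [Semiring R]
    [AddCommMonoid M] [Module R M] {x y : M} (h : LinearIndependent R ![x, y]) {s t s' t' : R} :
    s • x + t • y = s' • x + t' • y ↔ s = s' ∧ t = t' :=
  ⟨h.eq_of_pair, by rintro ⟨rfl, rfl⟩; rfl⟩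

section TangentLine

variable {E : Type*} [NormedAddCommGroup E] [NormedSpace ℝ E] {r : ℝ → E} {a : ℝ → ℝ} {t : ℝ}

theorem deriv_add_smul_deriv (hr : DifferentiableAt ℝ r t)
    (hr' : DifferentiableAt ℝ (deriv r) t) (ha : DifferentiableAt ℝ a t) :
    deriv (fun s => r s + a s • deriv r s) t
      = (1 + deriv a t) • deriv r t + a t • deriv (deriv r) t := by
  rw [deriv_fun_add (g := fun s => a s • deriv r s) hr (ha.smul hr'), deriv_fun_smul ha hr']
  module

theorem add_smul_deriv_add_smul_deriv_add_smul_deriv (hr : DifferentiableAt ℝ r t)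
    (hr' : DifferentiableAt ℝ (deriv r) t) (ha : DifferentiableAt ℝ a t) (b : ℝ) :
    r t + a t • deriv r t + b • deriv (fun s => r s + a s • deriv r s) t
      = r t + (((1 + deriv a t) * b + a t) • deriv r t + (a t * b) • deriv (deriv r) t) := by
  rw [deriv_add_smul_deriv hr hr' ha]
  module

end TangentLine

theorem tangential_map_compatibility_iff_aa_general
    (r : ℝ → ℝ × ℝ) (ai aj aij aji : ℝ → ℝ)
    (hr : ContDiff ℝ 2 r)
    (hai : Differentiable ℝ ai) (haj : Differentiable ℝ aj)
    (t : ℝ)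
    (hind : LinearIndependent ℝ ![deriv r t, deriv (deriv r) t]) :
    (r t + aj t • deriv r t
        + aij t • deriv (fun s => r s + aj s • deriv r s) t
      = r t + ai t • deriv r t
        + aji t • deriv (fun s => r s + ai s • deriv r s) t)
    ↔ (aj t * aij t = ai t * aji t ∧
        (1 + deriv aj t) * aij t + aj t = (1 + deriv ai t) * aji t + ai t) := by
  have hr₁ : DifferentiableAt ℝ r t := hr.differentiable two_ne_zero t
  have hr₂ : DifferentiableAt ℝ (deriv r) t := hr.differentiable_deriv_two t
  rw [add_smul_deriv_add_smul_deriv_add_smul_deriv hr₁ hr₂ (haj t),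
    add_smul_deriv_add_smul_deriv_add_smul_deriv hr₁ hr₂ (hai t), add_right_inj,
    hind.smul_add_smul_eq_smul_add_smul_iff, and_comm]

/-- For a C² planar curve `r` with `r'(t), r''(t)` linearly independent,
the compatibility of the tangential map at `t` is equivalent to the two scalar
(aa)-equations at `t`. -/
theorem tangential_map_compatibility_iff_aa
    (r : ℝ → ℝ × ℝ) (ai aj aij aji : ℝ → ℝ)
    (hr : ContDiff ℝ 2 r)
    (hai : Differentiable ℝ ai) (haj : Differentiable ℝ aj)
    (haij : Differentiable ℝ aij) (haji : Differentiable ℝ aji)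
    (t : ℝ)
    (hind : LinearIndependent ℝ ![deriv r t, deriv (deriv r) t]) :
    (r t + aj t • deriv r t
        + aij t • deriv (fun s => r s + aj s • deriv r s) t
      = r t + ai t • deriv r t
        + aji t • deriv (fun s => r s + ai s • deriv r s) t)
    ↔ (aj t * aij t = ai t * aji t ∧
        (1 + deriv aj t) * aij t + aj t = (1 + deriv ai t) * aji t + ai t) :=
  tangential_map_compatibility_iff_aa_general r ai aj aij aji hr hai haj t hind
end

section
/- Let aⁱ, aʲ : ℝ → ℝ be differentiable functions and suppose the function w := aⁱ − aʲ + aⁱ·(aʲ)' − (aⁱ)'·aʲ is nonvanishing on ℝ. Define aⁱⱼ := (aⁱ − aʲ)·aⁱ / w and aʲᵢ := (aʲ − aⁱ)·aʲ / (−w). Then the (aa)-equations hold: aʲ·aⁱⱼ = aⁱ·aʲᵢ and (1 + (aʲ)')·aⁱⱼ + aʲ = (1 + (aⁱ)')·aʲᵢ + aⁱ. -/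
/-! At each `t` the derivatives enter only as scalars `a' = (aⁱ)'(t)`, `b' = (aʲ)'(t)`, so
both equations are identities in a field. The first is a ring identity. For the second,
clearing the denominator `w` reduces it to `(a - b) * ((1 + b') * a - (1 + a') * b - w) = 0`,
and the bracket vanishes by the definition of `w`. -/

section TangentialFormula

variable {K : Type*} [Field K]

theorem tangential_formula_aa_mul (a b w : K) :
    b * ((a - b) * a / w) = a * ((b - a) * b / -w) := by
  ring

theorem tangential_formula_aa_add {a b a' b' w : K} (hw : w = a - b + a * b' - a' * b)
    (hw0 : w ≠ 0) :
    (1 + b') * ((a - b) * a / w) + b = (1 + a') * ((b - a) * b / -w) + a := by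
  have key : (1 + b') * a - (1 + a') * b = w := by rw [hw]; ring
  rw [div_neg, ← sub_eq_zero]
  field_simp
  linear_combination (a - b) * key

end TangentialFormula

theorem tangential_map_formula_solves_aa_general
    (ai aj : ℝ → ℝ)
    (w : ℝ → ℝ)
    (hw : ∀ t, w t = ai t - aj t + ai t * deriv aj t - deriv ai t * aj t)
    (hw0 : ∀ t, w t ≠ 0)
    (aij aji : ℝ → ℝ)
    (haij : ∀ t, aij t = (ai t - aj t) * ai t / w t)
    (haji : ∀ t, aji t = (aj t - ai t) * aj t / (-w t)) :
    (∀ t, aj t * aij t = ai t * aji t) ∧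
    (∀ t, (1 + deriv aj t) * aij t + aj t = (1 + deriv ai t) * aji t + ai t) := by
  refine ⟨fun t => ?_, fun t => ?_⟩
  · rw [haij, haji]
    exact tangential_formula_aa_mul _ _ _
  · rw [haij, haji]
    exact tangential_formula_aa_add (hw t) (hw0 t)

/-- The explicit formula (Ta) of the tangential map solves the
(aa)-equations. -/
theorem tangential_map_formula_solves_aa
    (ai aj : ℝ → ℝ)
    (hai : Differentiable ℝ ai) (haj : Differentiable ℝ aj)
    (w : ℝ → ℝ)
    (hw : ∀ t, w t = ai t - aj t + ai t * deriv aj t - deriv ai t * aj t)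
    (hw0 : ∀ t, w t ≠ 0)
    (aij aji : ℝ → ℝ)
    (haij : ∀ t, aij t = (ai t - aj t) * ai t / w t)
    (haji : ∀ t, aji t = (aj t - ai t) * aj t / (-w t)) :
    (∀ t, aj t * aij t = ai t * aji t) ∧
    (∀ t, (1 + deriv aj t) * aij t + aj t = (1 + deriv ai t) * aji t + ai t) :=
  tangential_map_formula_solves_aa_general ai aj w hw hw0 aij aji haij haji
end

section
/- Let v, vᵢ, vⱼ, v_{ij} : ℝ → ℝ be differentiable functions, all nonvanishing, with vᵢ(t) ≠ vⱼ(t) for all t. Set aⁱ := v/vᵢ, aʲ := v/vⱼ, aⁱⱼ := vⱼ/v_{ij}, aʲᵢ := vᵢ/v_{ij}. Then the first (aa)-equation aʲ·aⁱⱼ = aⁱ·aʲᵢ holds identically, and the second (aa)-equation (1 + (aʲ)')·aⁱⱼ + aʲ = (1 + (aⁱ)')·aʲᵢ + aⁱ holds identically if and only if v_{ij} = vᵢ·vⱼ/v + (vᵢ'·vⱼ − vᵢ·vⱼ')/(vⱼ − vᵢ) identically on ℝ. -/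
/-! With `aⁱ = v/vᵢ` and `aⁱⱼ = vⱼ/v_{ij}` both sides of the first (aa)-equation equal `v/v_{ij}`.
In the second one the terms in `v'` coming from `(v/vᵢ)'` and `(v/vⱼ)'` cancel, and what is left
is linear in `v_{ij}` with coefficient `v (vⱼ - vᵢ)/(vᵢ vⱼ)`, nonzero because `vᵢ ≠ vⱼ`; solving
for `v_{ij}` gives (TTv). -/

theorem second_aa_equation_iff_vij_eq {v vi vj vij dv dvi dvj : ℝ}
    (hv : v ≠ 0) (hvi : vi ≠ 0) (hvj : vj ≠ 0) (hvij : vij ≠ 0) (hne : vi ≠ vj) :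
    (1 + (dv * vj - v * dvj) / vj ^ 2) * (vj / vij) + v / vj
        = (1 + (dv * vi - v * dvi) / vi ^ 2) * (vi / vij) + v / vi
      ↔ vij = vi * vj / v + (dvi * vj - vi * dvj) / (vj - vi) := by
  have hsub : vj - vi ≠ 0 := sub_ne_zero.mpr hne.symm
  have key : (1 + (dv * vj - v * dvj) / vj ^ 2) * (vj / vij) + v / vj
        - ((1 + (dv * vi - v * dvi) / vi ^ 2) * (vi / vij) + v / vi)
      = v * (vj - vi) / (vi * vj * vij)
          * (vi * vj / v + (dvi * vj - vi * dvj) / (vj - vi) - vij) := by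
    field_simp
    ring
  have hfactor : v * (vj - vi) / (vi * vj * vij) ≠ 0 := by positivity
  rw [← sub_eq_zero, key, mul_eq_zero, or_iff_right hfactor, sub_eq_zero, eq_comm]

theorem aa_in_potential_variables_general
    (v vi vj vij : ℝ → ℝ)
    (hv : Differentiable ℝ v) (hvi : Differentiable ℝ vi)
    (hvj : Differentiable ℝ vj)
    (hv0 : ∀ t, v t ≠ 0) (hvi0 : ∀ t, vi t ≠ 0)
    (hvj0 : ∀ t, vj t ≠ 0) (hvij0 : ∀ t, vij t ≠ 0)
    (hne : ∀ t, vi t ≠ vj t)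
    (ai aj aij aji : ℝ → ℝ)
    (hai : ∀ t, ai t = v t / vi t) (haj : ∀ t, aj t = v t / vj t)
    (haij : ∀ t, aij t = vj t / vij t) (haji : ∀ t, aji t = vi t / vij t) :
    (∀ t, aj t * aij t = ai t * aji t) ∧
    ((∀ t, (1 + deriv aj t) * aij t + aj t = (1 + deriv ai t) * aji t + ai t)
      ↔ (∀ t, vij t = vi t * vj t / v t
          + (deriv vi t * vj t - vi t * deriv vj t) / (vj t - vi t))) := by
  obtain rfl : ai = v / vi := funext hai
  obtain rfl : aj = v / vj := funext haj
  refine ⟨fun t => ?_, forall_congr' fun t => ?_⟩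
  · rw [haij, haji, Pi.div_apply, Pi.div_apply, div_mul_div_cancel₀ (hvj0 t),
      div_mul_div_cancel₀ (hvi0 t)]
  · rw [haij, haji, Pi.div_apply, Pi.div_apply,
      deriv_div hv.differentiableAt hvi.differentiableAt (hvi0 t),
      deriv_div hv.differentiableAt hvj.differentiableAt (hvj0 t)]
    exact second_aa_equation_iff_vij_eq (hv0 t) (hvi0 t) (hvj0 t) (hvij0 t) (hne t)

/-- In the potential variables `aⁱ = v/vᵢ`, `aⁱⱼ = vⱼ/v_{ij}`, the first
(aa)-equation holds automatically, and the second one holds identically iff `v_{ij}`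
is given by the map (TTv). -/
theorem aa_in_potential_variables
    (v vi vj vij : ℝ → ℝ)
    (hv : Differentiable ℝ v) (hvi : Differentiable ℝ vi)
    (hvj : Differentiable ℝ vj) (hvij : Differentiable ℝ vij)
    (hv0 : ∀ t, v t ≠ 0) (hvi0 : ∀ t, vi t ≠ 0)
    (hvj0 : ∀ t, vj t ≠ 0) (hvij0 : ∀ t, vij t ≠ 0)
    (hne : ∀ t, vi t ≠ vj t)
    (ai aj aij aji : ℝ → ℝ)
    (hai : ∀ t, ai t = v t / vi t) (haj : ∀ t, aj t = v t / vj t)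
    (haij : ∀ t, aij t = vj t / vij t) (haji : ∀ t, aji t = vi t / vij t) :
    (∀ t, aj t * aij t = ai t * aji t) ∧
    ((∀ t, (1 + deriv aj t) * aij t + aj t = (1 + deriv ai t) * aji t + ai t)
      ↔ (∀ t, vij t = vi t * vj t / v t
          + (deriv vi t * vj t - vi t * deriv vj t) / (vj t - vi t))) :=
  aa_in_potential_variables_general v vi vj vij hv hvi hvj hv0 hvi0 hvj0 hvij0 hne ai aj aij aji hai
    haj haij haji
end

section
/- Let v, vᵢ, vⱼ, v_{ij} : ℝ → ℝ be differentiable functions with vᵢ(t) ≠ vⱼ(t) for all t. Set aⁱ := vᵢ − v, aʲ := vⱼ − v, aⁱⱼ := v_{ij} − vⱼ, aʲᵢ := v_{ij} − vᵢ. Then the pair of equations aʲᵢ − aʲ = aⁱⱼ − aⁱ and (aⁱ)' − (aʲ)' = aⁱ·aʲᵢ − aʲ·aⁱⱼ holds identically if and only if v_{ij} = vᵢ + vⱼ − v + (vᵢ' − vⱼ')/(vᵢ − vⱼ) identically on ℝ. -/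
/-! The first compatibility equation holds automatically in potential variables, since both
sides equal `v_{ij} − vᵢ − vⱼ + v`. In the second one the derivative of `v` cancels, and its
right-hand side factors as `(vᵢ − vⱼ)(v_{ij} − vᵢ − vⱼ + v)`, so it can be solved for `v_{ij}`
exactly when `vᵢ ≠ vⱼ`. -/

theorem deriv_sub_sub_deriv_sub {𝕜 F : Type*} [NontriviallyNormedField 𝕜] [NormedAddCommGroup F]
    [NormedSpace 𝕜 F] {f g h : 𝕜 → F} {x : 𝕜} (hf : DifferentiableAt 𝕜 f x)
    (hg : DifferentiableAt 𝕜 g x) (hh : DifferentiableAt 𝕜 h x) :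
    deriv (fun t => f t - h t) x - deriv (fun t => g t - h t) x = deriv f x - deriv g x := by
  rw [deriv_fun_sub hf hh, deriv_fun_sub hg hh, sub_sub_sub_cancel_right]

theorem eq_mul_sub_mul_iff_eq_add_div {K : Type*} [Field K] {v vi vj vij d : K} (hne : vi ≠ vj) :
    d = (vi - v) * (vij - vi) - (vj - v) * (vij - vj) ↔ vij = vi + vj - v + d / (vi - vj) := by
  have hsub : vi - vj ≠ 0 := sub_ne_zero.mpr hne
  rw [show (vi - v) * (vij - vi) - (vj - v) * (vij - vj) = (vij - (vi + vj - v)) * (vi - vj) by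
    ring, ← div_eq_iff hsub, eq_comm, sub_eq_iff_eq_add']

theorem monic_aa_in_potential_variables_general
    (v vi vj vij : ℝ → ℝ)
    (hv : Differentiable ℝ v) (hvi : Differentiable ℝ vi)
    (hvj : Differentiable ℝ vj)
    (hne : ∀ t, vi t ≠ vj t)
    (ai aj aij aji : ℝ → ℝ)
    (hai : ∀ t, ai t = vi t - v t) (haj : ∀ t, aj t = vj t - v t)
    (haij : ∀ t, aij t = vij t - vj t) (haji : ∀ t, aji t = vij t - vi t) :
    ((∀ t, aji t - aj t = aij t - ai t) ∧
     (∀ t, deriv ai t - deriv aj t = ai t * aji t - aj t * aij t))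
    ↔ (∀ t, vij t = vi t + vj t - v t
        + (deriv vi t - deriv vj t) / (vi t - vj t)) := by
  obtain rfl := funext hai
  obtain rfl := funext haj
  obtain rfl := funext haij
  obtain rfl := funext haji
  rw [and_iff_right fun t => by ring]
  refine forall_congr' fun t => ?_
  rw [deriv_sub_sub_deriv_sub (hvi t) (hvj t) (hv t)]
  exact eq_mul_sub_mul_iff_eq_add_div (hne t)

/-- In the potential variables `aⁱ = vᵢ − v`, `aⁱⱼ = v_{ij} − vⱼ`, the
compatibility equations of the monic factorization hold identically iff `v_{ij}` is
given by the map (TTv'). -/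
theorem monic_aa_in_potential_variables
    (v vi vj vij : ℝ → ℝ)
    (hv : Differentiable ℝ v) (hvi : Differentiable ℝ vi)
    (hvj : Differentiable ℝ vj) (hvij : Differentiable ℝ vij)
    (hne : ∀ t, vi t ≠ vj t)
    (ai aj aij aji : ℝ → ℝ)
    (hai : ∀ t, ai t = vi t - v t) (haj : ∀ t, aj t = vj t - v t)
    (haij : ∀ t, aij t = vij t - vj t) (haji : ∀ t, aji t = vij t - vi t) :
    ((∀ t, aji t - aj t = aij t - ai t) ∧
     (∀ t, deriv ai t - deriv aj t = ai t * aji t - aj t * aij t))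
    ↔ (∀ t, vij t = vi t + vj t - v t
        + (deriv vi t - deriv vj t) / (vi t - vj t)) :=
  monic_aa_in_potential_variables_general v vi vj vij hv hvi hvj hne ai aj aij aji hai haj haij haji
end

section
/- Define, for C² functions, g(v, vᵢ, vⱼ) := vᵢ + vⱼ − v + (vᵢ' − vⱼ')/(vᵢ − vⱼ). Let v, v₁, v₂, v₃ : ℝ → ℝ be C² functions such that v₁ ≠ v₂, v₁ ≠ v₃, v₂ ≠ v₃ everywhere, and, with v_{ij} := g(v, vᵢ, vⱼ), also v₁₂ ≠ v₁₃, v₁₂ ≠ v₂₃, v₁₃ ≠ v₂₃ everywhere. Then the three functions g(v₁, g(v,v₁,v₂), g(v,v₁,v₃)), g(v₂, g(v,v₁,v₂), g(v,v₂,v₃)) and g(v₃, g(v,v₁,v₃), g(v,v₂,v₃)) coincide. -/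
/-- The tangential map in additive potential form, equation (TTv') of the paper:
`g(v, vᵢ, vⱼ) = vᵢ + vⱼ − v + (vᵢ' − vⱼ')/(vᵢ − vⱼ)`. -/
noncomputable def tangMap' (v vi vj : ℝ → ℝ) : ℝ → ℝ :=
  fun t => vi t + vj t - v t + (deriv vi t - deriv vj t) / (vi t - vj t)

/-!
Write `pᵢⱼ = (vᵢ' − vⱼ')/(vᵢ − vⱼ)` and `Sᵢⱼ = (vᵢ'' − vⱼ'')/(vᵢ − vⱼ)`, so that
`vᵢⱼ = vᵢ + vⱼ − v + pᵢⱼ` and, by the quotient rule, `vᵢⱼ' = vᵢ' + vⱼ' − v' + Sᵢⱼ − pᵢⱼ²`.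
The `pᵢⱼ` and `Sᵢⱼ` are divided differences of the `vᵢ'` and `vᵢ''` over the nodes `vᵢ`, so their
second divided differences `μ = (p₁₂ − p₁₃)/(v₂ − v₃) = (p₁₂ − p₂₃)/(v₁ − v₃)` and `κ` (likewise
from the `Sᵢⱼ`) do not depend on the order of the nodes. In these terms
`g(v₁, v₁₂, v₁₃) = v₁ + v₂ + v₃ − 2v + σ + (κ − μσ)/(1 + μ)` with `σ = p₁₂ + p₁₃ + p₂₃`,
which is symmetric in the three indices.
-/

theorem tangMap'_comm (v a b : ℝ → ℝ) : tangMap' v a b = tangMap' v b a := by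
  funext t
  simp only [tangMap']
  rw [← neg_sub (deriv b t), ← neg_sub (b t), neg_div_neg_eq]
  ring

theorem hasDerivAt_tangMap' {v vi vj : ℝ → ℝ} {t : ℝ}
    (hv : DifferentiableAt ℝ v t) (hvi : DifferentiableAt ℝ vi t)
    (hvj : DifferentiableAt ℝ vj t) (hvi' : DifferentiableAt ℝ (deriv vi) t)
    (hvj' : DifferentiableAt ℝ (deriv vj) t) (hij : vi t ≠ vj t) :
    HasDerivAt (tangMap' v vi vj)
      (deriv vi t + deriv vj t - deriv v t +
        ((deriv (deriv vi) t - deriv (deriv vj) t) / (vi t - vj t)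
          - ((deriv vi t - deriv vj t) / (vi t - vj t)) ^ 2)) t := by
  have hq := (hvi'.hasDerivAt.sub hvj'.hasDerivAt).div (hvi.hasDerivAt.sub hvj.hasDerivAt)
    (sub_ne_zero.2 hij)
  have h : HasDerivAt (tangMap' v vi vj) _ t :=
    ((hvi.hasDerivAt.add hvj.hasDerivAt).sub hv.hasDerivAt).add hq
  refine h.congr_deriv ?_
  simp only [Pi.sub_apply]
  field_simp

section Field

variable {K : Type*} [Field K]

theorem div_eq_div_of_mul_eq_mul {N D N' D' x y : K} (hx : x ≠ 0) (hy : y ≠ 0)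
    (hN : N * y = N' * x) (hD : D * y = D' * x) : N / D = N' / D' := by
  rw [← mul_div_mul_right N D hy, hN, hD, mul_div_mul_right _ _ hx]

/-- `g(a, v_ab, v_ac) = g(b, v_ab, v_bc)` at a point, written in terms of the 2-jets
`(a, a₁, a₂)`, `(b, b₁, b₂)`, `(c, c₁, c₂)` and `(v, v₁)` there. -/
theorem tangMap'_jet_swap {a b c v a₁ b₁ c₁ v₁ a₂ b₂ c₂ p q r S T U : K}
    (hab : a ≠ b) (hac : a ≠ c) (hbc : b ≠ c)
    (hp : p = (a₁ - b₁) / (a - b)) (hq : q = (a₁ - c₁) / (a - c))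
    (hr : r = (b₁ - c₁) / (b - c)) (hS : S = (a₂ - b₂) / (a - b))
    (hT : T = (a₂ - c₂) / (a - c)) (hU : U = (b₂ - c₂) / (b - c))
    (hD : a + b - v + p ≠ a + c - v + q) :
    (a + b - v + p) + (a + c - v + q) - a
        + ((a₁ + b₁ - v₁ + (S - p ^ 2)) - (a₁ + c₁ - v₁ + (T - q ^ 2)))
          / ((a + b - v + p) - (a + c - v + q))
      = (a + b - v + p) + (b + c - v + r) - b
        + ((a₁ + b₁ - v₁ + (S - p ^ 2)) - (b₁ + c₁ - v₁ + (U - r ^ 2)))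
          / ((a + b - v + p) - (b + c - v + r)) := by
  rw [← sub_ne_zero] at hab hac hbc
  replace hp : a₁ - b₁ = p * (a - b) := by rw [hp, div_mul_cancel₀ _ hab]
  replace hq : a₁ - c₁ = q * (a - c) := by rw [hq, div_mul_cancel₀ _ hac]
  replace hr : b₁ - c₁ = r * (b - c) := by rw [hr, div_mul_cancel₀ _ hbc]
  replace hS : a₂ - b₂ = S * (a - b) := by rw [hS, div_mul_cancel₀ _ hab]
  replace hT : a₂ - c₂ = T * (a - c) := by rw [hT, div_mul_cancel₀ _ hac]
  replace hU : b₂ - c₂ = U * (b - c) := by rw [hU, div_mul_cancel₀ _ hbc]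
  have hpqr : (p - q) * (a - c) = (p - r) * (b - c) := by linear_combination -hp + hq - hr
  have hSTU : (S - T) * (a - c) = (S - U) * (b - c) := by linear_combination -hS + hT - hU
  have hD₁ : b - c + (p - q) ≠ 0 := by contrapose! hD; linear_combination hD
  have hD₂ : a - c + (p - r) ≠ 0 := by
    contrapose! hD₁
    exact (mul_eq_zero.1 (by linear_combination hpqr + (b - c) * hD₁)).resolve_right hac
  set σ := p + q + r
  have hN₁ : b₁ - c₁ + (S - p ^ 2) - (T - q ^ 2)
      = r * (b - c + (p - q)) + ((S - T) - (p - q) * σ) := by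
    linear_combination hr
  have hN₂ : a₁ - c₁ + (S - p ^ 2) - (U - r ^ 2)
      = q * (a - c + (p - r)) + ((S - U) - (p - r) * σ) := by
    linear_combination hq
  calc _ = a + b + c - 2 * v + σ + ((S - T) - (p - q) * σ) / (b - c + (p - q)) := by
        rw [show (a + b - v + p) - (a + c - v + q) = b - c + (p - q) by ring,
          show a₁ + b₁ - v₁ + (S - p ^ 2) - (a₁ + c₁ - v₁ + (T - q ^ 2))
            = b₁ - c₁ + (S - p ^ 2) - (T - q ^ 2) by ring,
          hN₁, add_div, mul_div_cancel_right₀ _ hD₁]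
        ring
    _ = a + b + c - 2 * v + σ + ((S - U) - (p - r) * σ) / (a - c + (p - r)) := by
        congr 1
        exact div_eq_div_of_mul_eq_mul hbc hac (by linear_combination hSTU - σ * hpqr)
          (by linear_combination hpqr)
    _ = _ := by
        rw [show (a + b - v + p) - (b + c - v + r) = a - c + (p - r) by ring,
          show a₁ + b₁ - v₁ + (S - p ^ 2) - (b₁ + c₁ - v₁ + (U - r ^ 2))
            = a₁ - c₁ + (S - p ^ 2) - (U - r ^ 2) by ring,
          hN₂, add_div, mul_div_cancel_right₀ _ hD₂]
        ring

end Field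

theorem tangMap'_tangMap'_swap {v a b c : ℝ → ℝ} (hv : Differentiable ℝ v)
    (ha : ContDiff ℝ 2 a) (hb : ContDiff ℝ 2 b) (hc : ContDiff ℝ 2 c)
    (hab : ∀ t, a t ≠ b t) (hac : ∀ t, a t ≠ c t) (hbc : ∀ t, b t ≠ c t)
    (hD : ∀ t, tangMap' v a b t ≠ tangMap' v a c t) :
    tangMap' a (tangMap' v a b) (tangMap' v a c)
      = tangMap' b (tangMap' v a b) (tangMap' v b c) := by
  funext t
  have deriv_eq {f g : ℝ → ℝ} (hf : ContDiff ℝ 2 f) (hg : ContDiff ℝ 2 g) (hfg : f t ≠ g t) :=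
    (hasDerivAt_tangMap' (hv t) (hf.differentiable two_ne_zero t)
      (hg.differentiable two_ne_zero t) (hf.differentiable_deriv_two t)
      (hg.differentiable_deriv_two t) hfg).deriv
  rw [tangMap'.eq_1 a, tangMap'.eq_1 b, deriv_eq ha hb (hab t), deriv_eq ha hc (hac t),
    deriv_eq hb hc (hbc t)]
  exact tangMap'_jet_swap (hab t) (hac t) (hbc t) rfl rfl rfl rfl rfl rfl (hD t)

theorem tangMap'_3D_consistency_general
    (v v1 v2 v3 : ℝ → ℝ)
    (hv : ContDiff ℝ 2 v) (hv1 : ContDiff ℝ 2 v1)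
    (hv2 : ContDiff ℝ 2 v2) (hv3 : ContDiff ℝ 2 v3)
    (h12 : ∀ t, v1 t ≠ v2 t) (h13 : ∀ t, v1 t ≠ v3 t) (h23 : ∀ t, v2 t ≠ v3 t)
    (h1213 : ∀ t, tangMap' v v1 v2 t ≠ tangMap' v v1 v3 t)
    (h1223 : ∀ t, tangMap' v v1 v2 t ≠ tangMap' v v2 v3 t) :
    tangMap' v1 (tangMap' v v1 v2) (tangMap' v v1 v3)
      = tangMap' v2 (tangMap' v v1 v2) (tangMap' v v2 v3) ∧
    tangMap' v2 (tangMap' v v1 v2) (tangMap' v v2 v3)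
      = tangMap' v3 (tangMap' v v1 v3) (tangMap' v v2 v3) := by
  have hv' := hv.differentiable two_ne_zero
  refine ⟨tangMap'_tangMap'_swap hv' hv1 hv2 hv3 h12 h13 h23 h1213, ?_⟩
  have h231 := tangMap'_tangMap'_swap hv' hv2 hv3 hv1 h23 (fun t => (h12 t).symm)
    (fun t => (h13 t).symm) (fun t => by rw [tangMap'_comm v v2 v1]; exact (h1223 t).symm)
  rwa [tangMap'_comm v v2 v1, tangMap'_comm v v3 v1, tangMap'_comm v2, tangMap'_comm v3] at h231

/-- 3D-consistency of the map (TTv'). -/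
theorem tangMap'_3D_consistency
    (v v1 v2 v3 : ℝ → ℝ)
    (hv : ContDiff ℝ 2 v) (hv1 : ContDiff ℝ 2 v1)
    (hv2 : ContDiff ℝ 2 v2) (hv3 : ContDiff ℝ 2 v3)
    (h12 : ∀ t, v1 t ≠ v2 t) (h13 : ∀ t, v1 t ≠ v3 t) (h23 : ∀ t, v2 t ≠ v3 t)
    (h1213 : ∀ t, tangMap' v v1 v2 t ≠ tangMap' v v1 v3 t)
    (h1223 : ∀ t, tangMap' v v1 v2 t ≠ tangMap' v v2 v3 t)
    (h1323 : ∀ t, tangMap' v v1 v3 t ≠ tangMap' v v2 v3 t) :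
    tangMap' v1 (tangMap' v v1 v2) (tangMap' v v1 v3)
      = tangMap' v2 (tangMap' v v1 v2) (tangMap' v v2 v3) ∧
    tangMap' v2 (tangMap' v v1 v2) (tangMap' v v2 v3)
      = tangMap' v3 (tangMap' v v1 v3) (tangMap' v v2 v3) :=
  tangMap'_3D_consistency_general v v1 v2 v3 hv hv1 hv2 hv3 h12 h13 h23 h1213 h1223
end

section
/- Let γ, δ ∈ ℝ satisfy cos δ − γ·sin δ = exp(−γδ), and set a := exp(γδ)·sin δ. Let r : ℝ → ℂ be the logarithmic spiral r(t) = exp((γ + i)t). Then for every t ∈ ℝ, r(t + δ) = r(t) + a·r'(t); that is, the point r(t + δ) lies on the tangent line to the spiral at r(t). -/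
open Complex

/-- If `δ` is a root of the transcendental equation
`cos δ − γ sin δ = exp(−γδ)`, then the point `r(t + δ)` of the logarithmic spiral
`r(t) = exp((γ + i)t)` lies on the tangent line at `r(t)`, with tangent coefficient
`a = exp(γδ) sin δ`. -/
theorem log_spiral_self_intersection
    (γ δ : ℝ)
    (hδ : Real.cos δ - γ * Real.sin δ = Real.exp (-(γ * δ)))
    (a : ℝ) (ha : a = Real.exp (γ * δ) * Real.sin δ)
    (r : ℝ → ℂ) (hr : ∀ t : ℝ, r t = Complex.exp ((γ + Complex.I) * t)) :
    ∀ t : ℝ, r (t + δ) = r t + (a : ℂ) * deriv r t := by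
  intro t
  have hre : r = fun t : ℝ => Complex.exp ((γ + Complex.I) * t) := funext hr
  have hd : HasDerivAt r (((γ : ℂ) + Complex.I) * Complex.exp ((γ + Complex.I) * t)) t := by
    rw [hre]
    have h1 : HasDerivAt (fun s : ℝ => ((γ : ℂ) + Complex.I) * s) ((γ : ℂ) + Complex.I) t := by
      simpa using ((hasDerivAt_id t).ofReal_comp.const_mul ((γ : ℂ) + Complex.I))
    simpa [mul_comm] using h1.cexp
  have hderiv : deriv r t = ((γ : ℂ) + Complex.I) * Complex.exp ((γ + Complex.I) * t) :=
    hd.deriv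
  have h1 : Real.exp (γ * δ) * Real.exp (-(γ * δ)) = 1 := by
    rw [← Real.exp_add]; simp
  have key : Real.exp (γ * δ) * Real.cos δ = 1 + γ * a := by
    rw [ha]; linear_combination Real.exp (γ * δ) * hδ + h1
  have hpolar : Complex.exp (((γ : ℂ) + Complex.I) * δ) =
      ((Real.exp (γ * δ) * Real.cos δ : ℝ) : ℂ) + ((Real.exp (γ * δ) * Real.sin δ : ℝ) : ℂ) * Complex.I := by
    rw [add_mul, Complex.exp_add, mul_comm Complex.I (δ : ℂ), Complex.exp_mul_I,
      ← Complex.ofReal_mul, ← Complex.ofReal_exp]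
    push_cast
    ring
  have hexp : Complex.exp (((γ : ℂ) + Complex.I) * δ) = 1 + (a : ℂ) * ((γ : ℂ) + Complex.I) := by
    rw [hpolar, key, ← ha]
    push_cast
    ring
  rw [hr, hr, hderiv, Complex.ofReal_add, mul_add, Complex.exp_add]
  rw [hexp]
  ring
end

section
/- Let γ ∈ ℝ, and let δ₁, δ₂ ∈ ℝ be two roots of the transcendental equation cos δ − γ·sin δ = exp(−γδ); set aᵏ := exp(γδₖ)·sin δₖ for k = 1, 2. Let r(t) = exp((γ + i)t) be the logarithmic spiral in ℂ. Then for every t ∈ ℝ, the point r(t + δ₁ + δ₂) lies on the tangent line of the spiral at r(t + δ₁) and on the tangent line at r(t + δ₂); explicitly, r(t + δ₁ + δ₂) = r(t + δ₁) + a²·r'(t + δ₁) = r(t + δ₂) + a¹·r'(t + δ₂). (Theorem 2: the tangents through the intersection points of the logarithmic spiral with one of its tangents meet again on the same spiral.) -/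
open Complex

lemma key (γ δ a : ℝ)
    (hδ : Real.cos δ - γ * Real.sin δ = Real.exp (-(γ * δ)))
    (ha : a = Real.exp (γ * δ) * Real.sin δ) :
    Complex.exp ((γ + Complex.I) * δ) = 1 + (a : ℂ) * (γ + Complex.I) := by
  have h1 : Complex.exp ((γ + Complex.I) * δ)
      = Real.exp (γ * δ) * (Real.cos δ + Real.sin δ * Complex.I) := by
    rw [add_mul, Complex.exp_add, mul_comm Complex.I (δ : ℂ), Complex.exp_mul_I]
    push_cast
    ring
  rw [h1]
  have h2 : Real.exp (γ * δ) * (Real.cos δ - γ * Real.sin δ) = 1 := by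
    rw [hδ, ← Real.exp_add]; simp
  apply Complex.ext <;>
  · simp only [Complex.add_re, Complex.add_im, Complex.mul_re, Complex.mul_im,
      Complex.ofReal_re, Complex.ofReal_im, Complex.I_re, Complex.I_im,
      Complex.one_re, Complex.one_im, ha]
    nlinarith [h2]

lemma deriv_r (γ : ℝ) (r : ℝ → ℂ)
    (hr : ∀ t : ℝ, r t = Complex.exp ((γ + Complex.I) * t)) (t : ℝ) :
    deriv r t = (γ + Complex.I) * Complex.exp ((γ + Complex.I) * t) := by
  have : r = fun t : ℝ => Complex.exp ((γ + Complex.I) * (t : ℂ)) := funext hr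
  rw [this]
  have h : HasDerivAt (fun t : ℝ => Complex.exp ((γ + Complex.I) * (t : ℂ)))
      ((γ + Complex.I) * Complex.exp ((γ + Complex.I) * t)) t := by
    have h1 : HasDerivAt (fun t : ℝ => ((γ + Complex.I) * (t : ℂ)))
        (γ + Complex.I) t := by
      simpa using ((hasDerivAt_id (t : ℂ)).const_mul (γ + Complex.I)).comp_ofReal
    simpa [mul_comm] using h1.cexp
  exact h.deriv

/-- Theorem 2 of the paper: for two roots `δ₁, δ₂` of
`cos δ − γ sin δ = exp(−γδ)`, the point `r(t + δ₁ + δ₂)` of the logarithmic spiral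
`r(t) = exp((γ + i)t)` lies both on the tangent at `r(t + δ₁)` and on the tangent at
`r(t + δ₂)`: the tangents through the intersection points of the spiral with one of
its tangents meet again on the same spiral. -/
theorem log_spiral_tangents_meet_on_spiral
    (γ δ₁ δ₂ : ℝ)
    (hδ₁ : Real.cos δ₁ - γ * Real.sin δ₁ = Real.exp (-(γ * δ₁)))
    (hδ₂ : Real.cos δ₂ - γ * Real.sin δ₂ = Real.exp (-(γ * δ₂)))
    (a₁ a₂ : ℝ)
    (ha₁ : a₁ = Real.exp (γ * δ₁) * Real.sin δ₁)
    (ha₂ : a₂ = Real.exp (γ * δ₂) * Real.sin δ₂)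
    (r : ℝ → ℂ) (hr : ∀ t : ℝ, r t = Complex.exp ((γ + Complex.I) * t)) :
    ∀ t : ℝ,
      r (t + δ₁ + δ₂) = r (t + δ₁) + (a₂ : ℂ) * deriv r (t + δ₁) ∧
      r (t + δ₁ + δ₂) = r (t + δ₂) + (a₁ : ℂ) * deriv r (t + δ₂) := by
  intro t
  have k1 := key γ δ₁ a₁ hδ₁ ha₁
  have k2 := key γ δ₂ a₂ hδ₂ ha₂
  constructor
  · rw [hr, hr, deriv_r γ r hr]
    push_cast
    rw [show ((γ : ℂ) + Complex.I) * ((t : ℂ) + δ₁ + δ₂)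
        = (γ + Complex.I) * ((t : ℂ) + δ₁) + (γ + Complex.I) * δ₂ by ring,
      Complex.exp_add, k2]
    ring
  · rw [hr, hr, deriv_r γ r hr]
    push_cast
    rw [show ((γ : ℂ) + Complex.I) * ((t : ℂ) + δ₁ + δ₂)
        = (γ + Complex.I) * ((t : ℂ) + δ₂) + (γ + Complex.I) * δ₁ by ring,
      Complex.exp_add, k1]
    ring
end

section
/- Let r : ℝ → ℝ² and τ, ν : ℝ → ℝ² and y : ℝ → ℝ be differentiable and satisfy the frame equations r' = y·τ, τ' = ν, ν' = −τ. Let γ ∈ ℝ with sin γ ≠ 0, and let a : ℝ → ℝ be differentiable with y + (a·y)' = a·y·(cos γ / sin γ). Define r̃ := r + a·y·τ, ỹ := a·y / sin γ, τ̃ := τ·cos γ + ν·sin γ, ν̃ := ν·cos γ − τ·sin γ. Then r̃' = ỹ·τ̃, τ̃' = ν̃, and ν̃' = −τ̃; that is, the curve r̃, which meets every tangent line of r under the constant angle γ, carries a frame of the same form in the same parameter t. -/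
/-!
Differentiating `r + (a y) τ` with `r' = y τ` and `τ' = ν` gives `(y + (a y)') τ + a y ν`, and the
constraint (ya) turns this into `(a y / sin γ) (cos γ τ + sin γ ν)`. Rotating the frame `(τ, ν)` by
the constant angle `γ` preserves the equations `τ' = ν`, `ν' = -τ`, since they say that `(τ, ν)`
itself turns with unit angular speed.
-/

section MovingFrame

variable {E : Type*} [NormedAddCommGroup E] [NormedSpace ℝ E] {τ ν : ℝ → E}

theorem hasDerivAt_frame_combination (hτ : ∀ t, HasDerivAt τ (ν t) t)
    (hν : ∀ t, HasDerivAt ν (-τ t) t) (c s t : ℝ) :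
    HasDerivAt (fun t => c • τ t + s • ν t) (c • ν t - s • τ t) t :=
  (((hτ t).const_smul c).add ((hν t).const_smul s)).congr_deriv (by module)

theorem hasDerivAt_add_smul_tangent {r : ℝ → E} {g y : ℝ → ℝ} {g' t : ℝ}
    (hr : HasDerivAt r (y t • τ t) t) (hg : HasDerivAt g g' t) (hτ : HasDerivAt τ (ν t) t) :
    HasDerivAt (fun t => r t + g t • τ t) ((y t + g') • τ t + g t • ν t) t :=
  (hr.add (hg.smul hτ)).congr_deriv (by module)

end MovingFrame

theorem add_smul_eq_div_sin_smul_rotation {E : Type*} [AddCommGroup E] [Module ℝ E]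
    {y g g' γ : ℝ} (u v : E) (hγ : Real.sin γ ≠ 0)
    (hya : y + g' = g * (Real.cos γ / Real.sin γ)) :
    (y + g') • u + g • v = (g / Real.sin γ) • (Real.cos γ • u + Real.sin γ • v) := by
  rw [hya, smul_add, smul_smul, smul_smul, div_mul_cancel₀ g hγ]
  congr 2
  ring

/-- A loxodrome `r̃ = r + a·y·τ` of a curve `r` with frame
`r' = y·τ, τ' = ν, ν' = −τ` carries a frame of the same form in the same parameter,
provided the coefficient `a` satisfies the constraint (ya):
`y + (a·y)' = a·y·cot γ`. -/
theorem loxodrome_frame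
    (r τ ν : ℝ → ℝ × ℝ) (y a : ℝ → ℝ) (γ : ℝ)
    (hr : Differentiable ℝ r) (hτ : Differentiable ℝ τ) (hν : Differentiable ℝ ν)
    (hy : Differentiable ℝ y) (ha : Differentiable ℝ a)
    (hframe_r : ∀ t, deriv r t = y t • τ t)
    (hframe_τ : ∀ t, deriv τ t = ν t)
    (hframe_ν : ∀ t, deriv ν t = -τ t)
    (hγ : Real.sin γ ≠ 0)
    (hya : ∀ t, y t + deriv (fun s => a s * y s) t
      = a t * y t * (Real.cos γ / Real.sin γ))
    (rt τt νt : ℝ → ℝ × ℝ) (yt : ℝ → ℝ)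
    (hrt : ∀ t, rt t = r t + (a t * y t) • τ t)
    (hyt : ∀ t, yt t = a t * y t / Real.sin γ)
    (hτt : ∀ t, τt t = Real.cos γ • τ t + Real.sin γ • ν t)
    (hνt : ∀ t, νt t = Real.cos γ • ν t - Real.sin γ • τ t) :
    (∀ t, deriv rt t = yt t • τt t) ∧
    (∀ t, deriv τt t = νt t) ∧
    (∀ t, deriv νt t = -τt t) := by
  have hr' (t : ℝ) : HasDerivAt r (y t • τ t) t := hframe_r t ▸ (hr t).hasDerivAt
  have hτ' (t : ℝ) : HasDerivAt τ (ν t) t := hframe_τ t ▸ (hτ t).hasDerivAt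
  have hν' (t : ℝ) : HasDerivAt ν (-τ t) t := hframe_ν t ▸ (hν t).hasDerivAt
  obtain rfl : rt = fun t => r t + (a t * y t) • τ t := funext hrt
  obtain rfl : τt = fun t => Real.cos γ • τ t + Real.sin γ • ν t := funext hτt
  obtain rfl : νt = fun t => Real.cos γ • ν t - Real.sin γ • τ t := funext hνt
  refine ⟨fun t => ?_, fun t => ?_, fun t => ?_⟩
  · rw [(hasDerivAt_add_smul_tangent (hr' t) ((ha t).fun_mul (hy t)).hasDerivAt (hτ' t)).deriv,
      add_smul_eq_div_sin_smul_rotation _ _ hγ (hya t), hyt]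
  · exact (hasDerivAt_frame_combination hτ' hν' _ _ t).deriv
  · have hνt_eq : (fun t => Real.cos γ • ν t - Real.sin γ • τ t)
        = fun t => -Real.sin γ • τ t + Real.cos γ • ν t := by
      funext t
      module
    rw [hνt_eq, (hasDerivAt_frame_combination hτ' hν' _ _ t).deriv]
    module
end

section
/- Let y, aⁱ, aʲ : ℝ → ℝ be differentiable and let γⁱ, γʲ ∈ ℝ with sin γⁱ ≠ 0, sin γʲ ≠ 0, y nonvanishing, aⁱ, aʲ nonvanishing, aⁱ ≠ aʲ everywhere, and cot γⁱ ≠ cot γʲ. Assume the loxodrome constraints y + (aᵏ·y)' = aᵏ·y·cot γᵏ for k = i, j. Then aⁱ − aʲ + aⁱ·(aʲ)' − (aⁱ)'·aʲ is nonvanishing and the tangential map formula reduces to the algebraic expression (aⁱ − aʲ)·aⁱ / (aⁱ − aʲ + aⁱ·(aʲ)' − (aⁱ)'·aʲ) = (aⁱ/aʲ − 1)/(cot γʲ − cot γⁱ). -/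
/-!
Expanding `(a y)' = a' y + a y'` in the loxodrome equation and dividing by `y` gives
`a' = a cot γ − 1 − a y'/y`. Substituting this for both coefficients, the terms in `y'/y`
cancel, so the denominator of the tangential map is `aⁱ aʲ (cot γʲ − cot γⁱ)`, which is
nonvanishing; the quotient then simplifies to `(aⁱ/aʲ − 1)/(cot γʲ − cot γⁱ)`.
-/

section Loxodrome

variable {𝕜 : Type*} [NontriviallyNormedField 𝕜] {y a : 𝕜 → 𝕜} {c t : 𝕜}

theorem deriv_eq_of_loxodrome_eq (hy : DifferentiableAt 𝕜 y t) (ha : DifferentiableAt 𝕜 a t)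
    (hy0 : y t ≠ 0) (hya : y t + deriv (fun s => a s * y s) t = a t * y t * c) :
    deriv a t = a t * c - 1 - a t * deriv y t / y t := by
  rw [deriv_fun_mul ha hy] at hya
  field_simp
  linear_combination hya

theorem tangential_denominator_eq_of_loxodrome_eq {ai aj : 𝕜 → 𝕜} {ci cj : 𝕜}
    (hy : DifferentiableAt 𝕜 y t) (hai : DifferentiableAt 𝕜 ai t)
    (haj : DifferentiableAt 𝕜 aj t) (hy0 : y t ≠ 0)
    (hyai : y t + deriv (fun s => ai s * y s) t = ai t * y t * ci)
    (hyaj : y t + deriv (fun s => aj s * y s) t = aj t * y t * cj) :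
    ai t - aj t + ai t * deriv aj t - deriv ai t * aj t = ai t * aj t * (cj - ci) := by
  rw [deriv_eq_of_loxodrome_eq hy hai hy0 hyai, deriv_eq_of_loxodrome_eq hy haj hy0 hyaj]
  ring

end Loxodrome

theorem loxodrome_tangential_map_algebraic_general
    (y ai aj : ℝ → ℝ) (γi γj : ℝ)
    (hy : Differentiable ℝ y) (hai : Differentiable ℝ ai) (haj : Differentiable ℝ aj)
    (hy0 : ∀ t, y t ≠ 0) (hai0 : ∀ t, ai t ≠ 0) (haj0 : ∀ t, aj t ≠ 0)
    (hcot : Real.cos γi / Real.sin γi ≠ Real.cos γj / Real.sin γj)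
    (hyai : ∀ t, y t + deriv (fun s => ai s * y s) t
      = ai t * y t * (Real.cos γi / Real.sin γi))
    (hyaj : ∀ t, y t + deriv (fun s => aj s * y s) t
      = aj t * y t * (Real.cos γj / Real.sin γj)) :
    (∀ t, ai t - aj t + ai t * deriv aj t - deriv ai t * aj t ≠ 0) ∧
    (∀ t, (ai t - aj t) * ai t
        / (ai t - aj t + ai t * deriv aj t - deriv ai t * aj t)
      = (ai t / aj t - 1)
        / (Real.cos γj / Real.sin γj - Real.cos γi / Real.sin γi)) := by
  have hcot' := sub_ne_zero.mpr hcot.symm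
  have hden t := tangential_denominator_eq_of_loxodrome_eq hy.differentiableAt
    hai.differentiableAt haj.differentiableAt (hy0 t) (hyai t) (hyaj t)
  refine ⟨fun t => ?_, fun t => ?_⟩
  · rw [hden t]
    exact mul_ne_zero (mul_ne_zero (hai0 t) (haj0 t)) hcot'
  · rw [hden t]
    field_simp [hai0 t, haj0 t, hcot']

/-- Under the loxodrome constraints (ya), the denominator of the
tangential map (Ta) is nonvanishing and the map reduces to the algebraic expression
`(aⁱ/aʲ − 1)/(cot γʲ − cot γⁱ)`. -/
theorem loxodrome_tangential_map_algebraic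
    (y ai aj : ℝ → ℝ) (γi γj : ℝ)
    (hy : Differentiable ℝ y) (hai : Differentiable ℝ ai) (haj : Differentiable ℝ aj)
    (hγi : Real.sin γi ≠ 0) (hγj : Real.sin γj ≠ 0)
    (hy0 : ∀ t, y t ≠ 0) (hai0 : ∀ t, ai t ≠ 0) (haj0 : ∀ t, aj t ≠ 0)
    (hne : ∀ t, ai t ≠ aj t)
    (hcot : Real.cos γi / Real.sin γi ≠ Real.cos γj / Real.sin γj)
    (hyai : ∀ t, y t + deriv (fun s => ai s * y s) t
      = ai t * y t * (Real.cos γi / Real.sin γi))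
    (hyaj : ∀ t, y t + deriv (fun s => aj s * y s) t
      = aj t * y t * (Real.cos γj / Real.sin γj)) :
    (∀ t, ai t - aj t + ai t * deriv aj t - deriv ai t * aj t ≠ 0) ∧
    (∀ t, (ai t - aj t) * ai t
        / (ai t - aj t + ai t * deriv aj t - deriv ai t * aj t)
      = (ai t / aj t - 1)
        / (Real.cos γj / Real.sin γj - Real.cos γi / Real.sin γi)) :=
  loxodrome_tangential_map_algebraic_general y ai aj γi γj hy hai haj hy0 hai0 haj0 hcot hyai hyaj
end

section
/- Let y, aⁱ, aʲ : ℝ → ℝ be differentiable and let γⁱ, γʲ ∈ ℝ with sin γⁱ ≠ 0, sin γʲ ≠ 0, aʲ nonvanishing, and cot γⁱ ≠ cot γʲ. Assume y + (aᵏ·y)' = aᵏ·y·cot γᵏ for k = i, j, and set yⱼ := aʲ·y / sin γʲ and aⁱⱼ := (aⁱ/aʲ − 1)/(cot γʲ − cot γⁱ). Then yⱼ + (aⁱⱼ·yⱼ)' = aⁱⱼ·yⱼ·cot γⁱ holds identically. (Theorem 3: if Cᵢ and Cⱼ meet the tangents of C under constant angles γⁱ ≠ γʲ, then C_{ij} =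 F(C, Cᵢ, Cⱼ) meets the tangents of Cⱼ under the angle γⁱ.) -/
/-!
Write `uₖ = aᵏ y` and `cₖ = cot γᵏ`, so that (ya) reads `uₖ' = cₖ uₖ - y`. Then
`aⁱⱼ yⱼ = (uᵢ - uⱼ) / ((cⱼ - cᵢ) sin γʲ)` and `yⱼ = uⱼ / sin γʲ`; in `(uᵢ - uⱼ)'` the terms
`y` cancel, which leaves exactly the constraint (ya) for the pair `(uⱼ, (uᵢ - uⱼ)/(cⱼ - cᵢ))`
with constant `cᵢ`, and (ya) is invariant under rescaling both functions by `1 / sin γʲ`.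
-/

variable {𝕜 : Type*} [NontriviallyNormedField 𝕜]

/-- The constraint (ya) `y + (a y)' = a y cot γ` at `t`, written for `u = a y` and `c = cot γ`. -/
def LoxodromeConstraint (y u : 𝕜 → 𝕜) (c t : 𝕜) : Prop :=
  y t + deriv u t = u t * c

namespace LoxodromeConstraint

theorem const_mul {y u : 𝕜 → 𝕜} {c t : 𝕜} (h : LoxodromeConstraint y u c t) (k : 𝕜) :
    LoxodromeConstraint (fun s => k * y s) (fun s => k * u s) c t := by
  unfold LoxodromeConstraint at h ⊢
  rw [deriv_const_mul_field', ← mul_add, h, mul_assoc]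

theorem div_sub {y ui uj : 𝕜 → 𝕜} {ci cj t : 𝕜}
    (hui : DifferentiableAt 𝕜 ui t) (huj : DifferentiableAt 𝕜 uj t)
    (hi : LoxodromeConstraint y ui ci t) (hj : LoxodromeConstraint y uj cj t) (hc : ci ≠ cj) :
    LoxodromeConstraint uj (fun s => (ui s - uj s) / (cj - ci)) ci t := by
  unfold LoxodromeConstraint at hi hj ⊢
  have hci : deriv ui t = ui t * ci - y t := eq_sub_of_add_eq' hi
  have hcj : deriv uj t = uj t * cj - y t := eq_sub_of_add_eq' hj
  rw [deriv_div_const, deriv_fun_sub hui huj, hci, hcj]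
  field_simp [sub_ne_zero.2 hc.symm]
  ring

end LoxodromeConstraint

theorem loxodrome_preserved_by_tangential_map_general
    (y ai aj : ℝ → ℝ) (γi γj : ℝ)
    (hy : Differentiable ℝ y) (hai : Differentiable ℝ ai) (haj : Differentiable ℝ aj)
    (haj0 : ∀ t, aj t ≠ 0)
    (hcot : Real.cos γi / Real.sin γi ≠ Real.cos γj / Real.sin γj)
    (hyai : ∀ t, y t + deriv (fun s => ai s * y s) t
      = ai t * y t * (Real.cos γi / Real.sin γi))
    (hyaj : ∀ t, y t + deriv (fun s => aj s * y s) t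
      = aj t * y t * (Real.cos γj / Real.sin γj))
    (yj aij : ℝ → ℝ)
    (hyj : ∀ t, yj t = aj t * y t / Real.sin γj)
    (haij : ∀ t, aij t = (ai t / aj t - 1)
      / (Real.cos γj / Real.sin γj - Real.cos γi / Real.sin γi)) :
    ∀ t, yj t + deriv (fun s => aij s * yj s) t
      = aij t * yj t * (Real.cos γi / Real.sin γi) := by
  intro t
  set ci := Real.cos γi / Real.sin γi
  set cj := Real.cos γj / Real.sin γj
  set k := (Real.sin γj)⁻¹
  have hyj_eq : yj = fun s => k * (aj s * y s) := funext fun s => by rw [hyj, div_eq_inv_mul]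
  have haij_mul_yj :
      (fun s => aij s * yj s) = fun s => k * ((ai s * y s - aj s * y s) / (cj - ci)) :=
    funext fun s => by
      rw [haij, hyj]
      field_simp [haj0 s]
      exact div_eq_mul_inv _ _
  have h := (LoxodromeConstraint.div_sub ((hai t).mul (hy t)) ((haj t).mul (hy t))
    (hyai t) (hyaj t) hcot).const_mul k
  show LoxodromeConstraint yj (fun s => aij s * yj s) ci t
  rw [haij_mul_yj, hyj_eq]
  exact h

/-- Theorem 3 of the paper: if `Cᵢ`, `Cⱼ` are loxodromes of `C` with
angles `γⁱ ≠ γʲ`, then the curve `C_{ij}` constructed by the tangential map is a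
loxodrome of `Cⱼ` with angle `γⁱ`: the constraint (ya) holds for `yⱼ` and `aⁱⱼ`. -/
theorem loxodrome_preserved_by_tangential_map
    (y ai aj : ℝ → ℝ) (γi γj : ℝ)
    (hy : Differentiable ℝ y) (hai : Differentiable ℝ ai) (haj : Differentiable ℝ aj)
    (hγi : Real.sin γi ≠ 0) (hγj : Real.sin γj ≠ 0)
    (haj0 : ∀ t, aj t ≠ 0)
    (hcot : Real.cos γi / Real.sin γi ≠ Real.cos γj / Real.sin γj)
    (hyai : ∀ t, y t + deriv (fun s => ai s * y s) t
      = ai t * y t * (Real.cos γi / Real.sin γi))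
    (hyaj : ∀ t, y t + deriv (fun s => aj s * y s) t
      = aj t * y t * (Real.cos γj / Real.sin γj))
    (yj aij : ℝ → ℝ)
    (hyj : ∀ t, yj t = aj t * y t / Real.sin γj)
    (haij : ∀ t, aij t = (ai t / aj t - 1)
      / (Real.cos γj / Real.sin γj - Real.cos γi / Real.sin γi)) :
    ∀ t, yj t + deriv (fun s => aij s * yj s) t
      = aij t * yj t * (Real.cos γi / Real.sin γi) :=
  loxodrome_preserved_by_tangential_map_general y ai aj γi γj hy hai haj haj0 hcot hyai hyaj yj aij
    hyj haij
end

section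
/- Let y, aⁱ, aʲ : ℝ → ℝ be functions and γⁱ, γʲ ∈ ℝ with sin γⁱ ≠ 0, sin γʲ ≠ 0, sin(γⁱ − γʲ) ≠ 0. Define yᵢ := aⁱ·y / sin γⁱ, yⱼ := aʲ·y / sin γʲ, aⁱⱼ := (aⁱ/aʲ − 1)/(cot γʲ − cot γⁱ) (assuming aʲ nonvanishing), and y_{ij} := aⁱⱼ·yⱼ / sin γⁱ. Then the linear superposition principle sin(γⁱ − γʲ)·y_{ij} = sin(γⁱ)·yᵢ − sin(γʲ)·yⱼ holds identically. -/
namespace Real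

theorem cos_div_sin_sub_cos_div_sin {a b : ℝ} (ha : sin a ≠ 0) (hb : sin b ≠ 0) :
    cos b / sin b - cos a / sin a = sin (a - b) / (sin a * sin b) := by
  rw [sin_sub]
  field_simp

end Real

/-- The linear superposition principle
`sin(γⁱ − γʲ)·y_{ij} = sin γⁱ·yᵢ − sin γʲ·yⱼ` for the loxodromic reduction of the
tangential map. -/
theorem loxodrome_linear_superposition
    (y ai aj : ℝ → ℝ) (γi γj : ℝ)
    (hγi : Real.sin γi ≠ 0) (hγj : Real.sin γj ≠ 0)
    (hγij : Real.sin (γi - γj) ≠ 0)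
    (haj0 : ∀ t, aj t ≠ 0)
    (yi yj aij yij : ℝ → ℝ)
    (hyi : ∀ t, yi t = ai t * y t / Real.sin γi)
    (hyj : ∀ t, yj t = aj t * y t / Real.sin γj)
    (haij : ∀ t, aij t = (ai t / aj t - 1)
      / (Real.cos γj / Real.sin γj - Real.cos γi / Real.sin γi))
    (hyij : ∀ t, yij t = aij t * yj t / Real.sin γi) :
    ∀ t, Real.sin (γi - γj) * yij t = Real.sin γi * yi t - Real.sin γj * yj t := by
  intro t
  rw [hyij, haij, hyj, hyi, Real.cos_div_sin_sub_cos_div_sin hγi hγj]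
  field_simp [haj0 t]
end

section
/- Let aⁱ, aʲ : ℤ → ℝ be sequences, let T denote the shift (T a)(n) = a(n+1), and suppose the sequence w := (1 − aʲ)·T(aⁱ) − (1 − aⁱ)·T(aʲ) is nowhere zero. Define aⁱⱼ := (aⁱ − aʲ)·T(aⁱ)/w and aʲᵢ := (aʲ − aⁱ)·T(aʲ)/(−w). Then the discrete compatibility relations T(aʲ)·aⁱⱼ = T(aⁱ)·aʲᵢ and (1 − aʲ)·aⁱⱼ + aʲ = (1 − aⁱ)·aʲᵢ + aⁱ hold at every n ∈ ℤ; equivalently, the operator identity (1 + aⁱⱼ·(T − 1))∘(1 + aʲ·(T − 1)) = (1 + aʲᵢ·(T − 1))∘(1 + aⁱ·(T − 1)) holds on every sequence r : ℤ → ℝ. -/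
/-- The discrete tangential map (dTa) solves the discrete compatibility
relations; equivalently, the factorization identity
`(1 + aⁱⱼ·(T − 1))∘(1 + aʲ·(T − 1)) = (1 + aʲᵢ·(T − 1))∘(1 + aⁱ·(T − 1))`
holds on every sequence. -/
theorem discrete_tangential_map_compatibility
    (ai aj : ℤ → ℝ)
    (w : ℤ → ℝ)
    (hw : ∀ n, w n = (1 - aj n) * ai (n + 1) - (1 - ai n) * aj (n + 1))
    (hw0 : ∀ n, w n ≠ 0)
    (aij aji : ℤ → ℝ)
    (haij : ∀ n, aij n = (ai n - aj n) * ai (n + 1) / w n)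
    (haji : ∀ n, aji n = (aj n - ai n) * aj (n + 1) / (-w n)) :
    ((∀ n, aj (n + 1) * aij n = ai (n + 1) * aji n) ∧
     (∀ n, (1 - aj n) * aij n + aj n = (1 - ai n) * aji n + ai n)) ∧
    (∀ r : ℤ → ℝ, ∀ n : ℤ,
      (r n + aj n * (r (n + 1) - r n))
        + aij n * ((r (n + 1) + aj (n + 1) * (r (n + 2) - r (n + 1)))
            - (r n + aj n * (r (n + 1) - r n)))
      = (r n + ai n * (r (n + 1) - r n))
        + aji n * ((r (n + 1) + ai (n + 1) * (r (n + 2) - r (n + 1)))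
            - (r n + ai n * (r (n + 1) - r n)))) := by
  have eA : ∀ n, aij n * w n = (ai n - aj n) * ai (n + 1) := by
    intro n; rw [haij, div_mul_cancel₀ _ (hw0 n)]
  have eB : ∀ n, aji n * w n = (ai n - aj n) * aj (n + 1) := by
    intro n
    rw [haji, div_neg, neg_mul, div_mul_cancel₀ _ (hw0 n)]
    ring
  have h1 : ∀ n, aj (n + 1) * aij n = ai (n + 1) * aji n := by
    intro n
    apply mul_right_cancel₀ (hw0 n)
    linear_combination aj (n + 1) * eA n - ai (n + 1) * eB n
  have h2 : ∀ n, (1 - aj n) * aij n + aj n = (1 - ai n) * aji n + ai n := by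
    intro n
    apply mul_right_cancel₀ (hw0 n)
    linear_combination (1 - aj n) * eA n - (1 - ai n) * eB n + (aj n - ai n) * hw n
  refine ⟨⟨h1, h2⟩, fun r n => ?_⟩
  linear_combination (r (n + 1) - r n) * h2 n + (r (n + 2) - r (n + 1)) * h1 n
end

section
/- Define, for sequences, f(v, vᵢ, vⱼ)(n) := vᵢ(n)·vⱼ(n)·(vⱼ(n+1) − vᵢ(n+1))/(v(n+1)·(vⱼ(n) − vᵢ(n))) + (vᵢ(n+1)·vⱼ(n) − vᵢ(n)·vⱼ(n+1))/(vⱼ(n) − vᵢ(n)). Let v, v₁, v₂, v₃ : ℤ → ℝ be sequences such that all denominators occurring below are nowhere zero: v(n+1) ≠ 0, v₁ ≠ v₂, v₁ ≠ v₃, v₂ ≠ v₃ pointwise, and, with v_{ij} := f(v, vᵢ, vⱼ), also v₁(n+1) ≠ 0, v₂(n+1) ≠ 0, v₃(n+1) ≠ 0, v₁₂ ≠ v₁₃, v₁₂ ≠ v₂₃, v₁₃ ≠ v₂₃ pointwise. Then the three sequences f(v₁, f(v,v₁,v₂), f(v,v₁,v₃)), f(v₂, f(v,v₁,v₂), f(v,v₂,v₃))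 and f(v₃, f(v,v₁,v₃), f(v,v₂,v₃)) coincide. (3D-consistency of the discrete tangential map.) -/
/-!
Fix `x = v(n+1)`, `y = v(n+2)` and write `(a, a', a'')`, `(b, b', b'')`, `(c, c', c'')` for the
values of `vᵢ`, `vⱼ`, `vₖ` at `n, n+1, n+2`. One step of the map is a quotient of Casorati-type
determinants, `v_{ij}(n) = det[a, (a - x) a'; b, (b - x) b'] / (x · det[1, a; 1, b])`, and two steps
give `det[a, (a - x) a', (a - x)(a' - y) a''; …] / (x y · det[1, a, (a - x) a'; …])`, with one row
per direction. Both determinants are alternating in the rows, so the quotient does not depend on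
which direction is taken last.
-/

/-- The discrete tangential map in potential form, equation (dTTv) of the paper. -/
noncomputable def dTangMap (v vi vj : ℤ → ℝ) : ℤ → ℝ :=
  fun n => vi n * vj n * (vj (n + 1) - vi (n + 1)) / (v (n + 1) * (vj n - vi n))
    + (vi (n + 1) * vj n - vi n * vj (n + 1)) / (vj n - vi n)

theorem Matrix.det_of_fin_three_swap {R : Type*} [CommRing R] (u v w : Fin 3 → R) :
    (Matrix.of ![v, u, w]).det = -(Matrix.of ![u, v, w]).det := by
  rw [show Matrix.of ![v, u, w] = (Matrix.of ![u, v, w]).submatrix (Equiv.swap 0 1) id by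
    ext i j; fin_cases i <;> rfl, Matrix.det_permute, Equiv.Perm.sign_swap (by decide)]
  simp

theorem Matrix.det_of_fin_three_rotate {R : Type*} [CommRing R] (u v w : Fin 3 → R) :
    (Matrix.of ![w, u, v]).det = (Matrix.of ![u, v, w]).det := by
  rw [show Matrix.of ![w, u, v] = (Matrix.of ![u, v, w]).submatrix (finRotate 3).symm id by
    ext i j; fin_cases i <;> rfl, Matrix.det_permute]
  simp [sign_finRotate]

section

variable {K : Type*} [Field K]

def dTang (x a a' b b' : K) : K :=
  a * b * (b' - a') / (x * (b - a)) + (a' * b - a * b') / (b - a)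

def dTangDen (x a a' b b' c c' : K) : K :=
  !![1, a, (a - x) * a'; 1, b, (b - x) * b'; 1, c, (c - x) * c'].det

def dTangNum (x y a a' a'' b b' b'' c c' c'' : K) : K :=
  !![a, (a - x) * a', (a - x) * (a' - y) * a'';
     b, (b - x) * b', (b - x) * (b' - y) * b'';
     c, (c - x) * c', (c - x) * (c' - y) * c''].det

variable {x y a a' b b' c c' : K}

theorem dTang_comm (x a a' b b' : K) : dTang x a a' b b' = dTang x b b' a a' := by
  simp only [dTang]
  rw [← neg_sub b a, mul_neg, div_neg, div_neg]
  ring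

theorem dTang_eq_det_div (hx : x ≠ 0) (hab : a ≠ b) :
    dTang x a a' b b' = !![a, (a - x) * a'; b, (b - x) * b'].det / (x * !![1, a; 1, b].det) := by
  have : b - a ≠ 0 := sub_ne_zero.2 hab.symm
  simp only [dTang, Matrix.det_fin_two_of]
  field_simp
  ring

theorem dTang_sub_left (hx : x ≠ 0) (hab : a ≠ b) :
    dTang x a a' b b' - a' = a * (b - x) * (b' - a') / (x * (b - a)) := by
  have : b - a ≠ 0 := sub_ne_zero.2 hab.symm
  simp only [dTang]
  field_simp
  ring

theorem dTang_sub_dTang (hx : x ≠ 0) (hab : a ≠ b) (hac : a ≠ c) :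
    dTang x a a' c c' - dTang x a a' b b'
      = a * dTangDen x a a' b b' c c' / (x * ((b - a) * (c - a))) := by
  have : b - a ≠ 0 := sub_ne_zero.2 hab.symm
  have : c - a ≠ 0 := sub_ne_zero.2 hac.symm
  simp only [dTang, dTangDen, Matrix.det_fin_three, Fin.isValue, Matrix.of_apply,
    Matrix.cons_val', Matrix.cons_val_zero, Matrix.cons_val_fin_one, Matrix.cons_val_one,
    Matrix.cons_val, one_mul, mul_one]
  field_simp
  ring

theorem mul_dTangNum (x y a a' a'' b b' b'' c c' c'' : K) :
    a' * dTangNum x y a a' a'' b b' b'' c c' c''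
      = !![a, (a - x) * a'; b, (b - x) * b'].det * !![a', (a' - y) * a''; c', (c' - y) * c''].det
          * (c - x)
        - !![a, (a - x) * a'; c, (c - x) * c'].det * !![a', (a' - y) * a''; b', (b' - y) * b''].det
          * (b - x) := by
  simp only [dTangNum, Matrix.det_fin_three, Fin.isValue, Matrix.of_apply, Matrix.cons_val',
    Matrix.cons_val_zero, Matrix.cons_val_fin_one, Matrix.cons_val_one, Matrix.cons_val,
    Matrix.det_fin_two_of]
  ring

theorem dTang_dTang_eq_div (a'' b'' c'' : K) (hx : x ≠ 0) (hy : y ≠ 0) (ha' : a' ≠ 0)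
    (hab : a ≠ b) (hac : a ≠ c) (hab' : a' ≠ b') (hac' : a' ≠ c')
    (hW : dTang x a a' b b' ≠ dTang x a a' c c') :
    dTang a' (dTang x a a' b b') (dTang y a' a'' b' b'') (dTang x a a' c c') (dTang y a' a'' c' c'')
      = dTangNum x y a a' a'' b b' b'' c c' c'' / (x * y * dTangDen x a a' b b' c c') := by
  have hW' := sub_ne_zero.2 hW.symm
  rw [dTang_sub_dTang hx hab hac] at hW'
  obtain ⟨ha, hR⟩ := mul_ne_zero_iff.1 (div_ne_zero_iff.1 hW').1
  have : b - a ≠ 0 := sub_ne_zero.2 hab.symm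
  have : c - a ≠ 0 := sub_ne_zero.2 hac.symm
  have : b' - a' ≠ 0 := sub_ne_zero.2 hab'.symm
  have : c' - a' ≠ 0 := sub_ne_zero.2 hac'.symm
  rw [dTang_eq_det_div ha' hW]
  simp only [Matrix.det_fin_two_of, one_mul, mul_one]
  rw [dTang_sub_left hx hac, dTang_sub_left hx hab, dTang_sub_dTang hx hab hac,
    dTang_eq_det_div hx hab, dTang_eq_det_div hx hac, dTang_eq_det_div hy hab',
    dTang_eq_det_div hy hac']
  simp only [Matrix.det_fin_two_of, one_mul, mul_one]
  field_simp
  rw [mul_dTangNum]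
  simp only [Matrix.det_fin_two_of]
  ring

theorem dTangDen_swap (x a a' b b' c c' : K) :
    dTangDen x b b' a a' c c' = -dTangDen x a a' b b' c c' :=
  Matrix.det_of_fin_three_swap _ _ _

theorem dTangDen_rotate (x a a' b b' c c' : K) :
    dTangDen x c c' a a' b b' = dTangDen x a a' b b' c c' :=
  Matrix.det_of_fin_three_rotate _ _ _

theorem dTangNum_swap (x y a a' a'' b b' b'' c c' c'' : K) :
    dTangNum x y b b' b'' a a' a'' c c' c'' = -dTangNum x y a a' a'' b b' b'' c c' c'' :=
  Matrix.det_of_fin_three_swap _ _ _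

theorem dTangNum_rotate (x y a a' a'' b b' b'' c c' c'' : K) :
    dTangNum x y c c' c'' a a' a'' b b' b'' = dTangNum x y a a' a'' b b' b'' c c' c'' :=
  Matrix.det_of_fin_three_rotate _ _ _

theorem dTang_3D_consistency (a'' b'' c'' : K) (hx : x ≠ 0) (hy : y ≠ 0) (ha' : a' ≠ 0)
    (hb' : b' ≠ 0) (hc' : c' ≠ 0) (hab : a ≠ b) (hac : a ≠ c) (hbc : b ≠ c)
    (hab' : a' ≠ b') (hac' : a' ≠ c') (hbc' : b' ≠ c')
    (hab_ac : dTang x a a' b b' ≠ dTang x a a' c c')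
    (hab_bc : dTang x a a' b b' ≠ dTang x b b' c c')
    (hac_bc : dTang x a a' c c' ≠ dTang x b b' c c') :
    dTang a' (dTang x a a' b b') (dTang y a' a'' b' b'') (dTang x a a' c c') (dTang y a' a'' c' c'')
        = dTang b' (dTang x a a' b b') (dTang y a' a'' b' b'') (dTang x b b' c c')
          (dTang y b' b'' c' c'') ∧
      dTang b' (dTang x a a' b b') (dTang y a' a'' b' b'') (dTang x b b' c c')
          (dTang y b' b'' c' c'')
        = dTang c' (dTang x a a' c c') (dTang y a' a'' c' c'') (dTang x b b' c c')
          (dTang y b' b'' c' c'') := by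
  have ea := dTang_dTang_eq_div a'' b'' c'' hx hy ha' hab hac hab' hac' hab_ac
  have eb := dTang_dTang_eq_div b'' a'' c'' hx hy hb' hab.symm hbc hab'.symm hbc'
    (dTang_comm x a a' b b' ▸ hab_bc)
  have ec := dTang_dTang_eq_div c'' a'' b'' hx hy hc' hac.symm hbc.symm hac'.symm hbc'.symm
    (dTang_comm x a a' c c' ▸ dTang_comm x b b' c c' ▸ hac_bc)
  rw [dTangNum_swap, dTangDen_swap, mul_neg, neg_div_neg_eq, dTang_comm x b,
    dTang_comm y b'] at eb
  rw [dTangNum_rotate, dTangDen_rotate, dTang_comm x c c' a, dTang_comm y c' c'' a',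
    dTang_comm x c c' b, dTang_comm y c' c'' b'] at ec
  exact ⟨ea.trans eb.symm, eb.trans ec.symm⟩

end

/-- 3D-consistency of the discrete tangential map in potential form. -/
theorem dTangMap_3D_consistency
    (v v1 v2 v3 : ℤ → ℝ)
    (hv0 : ∀ n, v (n + 1) ≠ 0)
    (h12 : ∀ n, v1 n ≠ v2 n) (h13 : ∀ n, v1 n ≠ v3 n) (h23 : ∀ n, v2 n ≠ v3 n)
    (hv10 : ∀ n, v1 (n + 1) ≠ 0) (hv20 : ∀ n, v2 (n + 1) ≠ 0)
    (hv30 : ∀ n, v3 (n + 1) ≠ 0)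
    (h1213 : ∀ n, dTangMap v v1 v2 n ≠ dTangMap v v1 v3 n)
    (h1223 : ∀ n, dTangMap v v1 v2 n ≠ dTangMap v v2 v3 n)
    (h1323 : ∀ n, dTangMap v v1 v3 n ≠ dTangMap v v2 v3 n) :
    dTangMap v1 (dTangMap v v1 v2) (dTangMap v v1 v3)
      = dTangMap v2 (dTangMap v v1 v2) (dTangMap v v2 v3) ∧
    dTangMap v2 (dTangMap v v1 v2) (dTangMap v v2 v3)
      = dTangMap v3 (dTangMap v v1 v3) (dTangMap v v2 v3) := by
  have h n := dTang_3D_consistency (v1 (n + 1 + 1)) (v2 (n + 1 + 1)) (v3 (n + 1 + 1))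
    (hv0 n) (hv0 (n + 1)) (hv10 n) (hv20 n) (hv30 n) (h12 n) (h13 n) (h23 n)
    (h12 (n + 1)) (h13 (n + 1)) (h23 (n + 1))
    (h1213 n) (h1223 n) (h1323 n)
  exact ⟨funext fun n => (h n).1, funext fun n => (h n).2⟩
end
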